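/- arXiv:1312.3316 — 2 statements merged into one kernel-verified Lean document; each statement's English description precedes it below -/
import Mathlib

section
/- Assume R spans V. There is a unique algebra automorphism τ of H (the Iwahori–Matsumoto involution) with τ(t_{s_α})=−t_{s_α} for all α∈Π and τ(ω)=−ω for all ω∈V_ℂ. If X is an irreducible finite-dimensional H-module such that both X and the twist X∘τ are tempered, then every λ∈Ω(X) satisfies Re λ=0, i.e., the central character of X is purely imaginary. -/
/- Formalization of the setting of Barbasch–Ciubotaru, "Hermitian forms for
affine Hecke algebras": a reduced root system, Weyl group, parameters,
complexifications, and the graded affine Hecke algebra. -/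

noncomputable section

structure GHA where
  (V Vd VC VdC W H : Type)
  [addV : AddCommGroup V] [modV : Module ℝ V] [fdV : FiniteDimensional ℝ V]
  [addVd : AddCommGroup Vd] [modVd : Module ℝ Vd] [fdVd : FiniteDimensional ℝ Vd]
  [deqV : DecidableEq V] [deqW : DecidableEq W]
  [addVC : AddCommGroup VC] [modVC : Module ℂ VC]
  [addVdC : AddCommGroup VdC] [modVdC : Module ℂ VdC]
  [grpW : Group W] [finW : Fintype W]
  [ringH : Ring H] [algH : Algebra ℂ H]
  -- the perfect bilinear pairing between V and V∨
  pairR : V →ₗ[ℝ] Vd →ₗ[ℝ] ℝ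
  pair_nondeg_left : ∀ v : V, (∀ u : Vd, pairR v u = 0) → v = 0
  pair_nondeg_right : ∀ u : Vd, (∀ v : V, pairR v u = 0) → u = 0
  -- roots, coroots, and the bijection α ↦ α∨
  roots : Finset V
  corootsF : Finset Vd
  cv : V → Vd
  roots_ne_zero : ∀ α ∈ roots, α ≠ 0
  coroots_ne_zero : ∀ β ∈ corootsF, β ≠ 0
  cv_mem : ∀ α ∈ roots, cv α ∈ corootsF
  cv_injOn : Set.InjOn cv roots
  cv_surjOn : ∀ β ∈ corootsF, ∃ α ∈ roots, cv α = β
  pair_cv_self : ∀ α ∈ roots, pairR α (cv α) = 2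
  reflV_mem : ∀ α ∈ roots, ∀ β ∈ roots, β - pairR β (cv α) • α ∈ roots
  reflVd_mem : ∀ α ∈ roots, ∀ β ∈ corootsF, β - pairR α β • cv α ∈ corootsF
  reduced : ∀ α ∈ roots, (2 : ℝ) • α ∉ roots
  -- simple roots and positive roots
  simples : Finset V
  posRoots : Finset V
  simples_subset : simples ⊆ posRoots
  posRoots_subset : posRoots ⊆ roots
  roots_pos_or_neg : ∀ α ∈ roots, α ∈ posRoots ∨ -α ∈ posRoots
  posRoots_not_neg : ∀ α ∈ posRoots, -α ∉ posRoots
  simples_linearIndependent : LinearIndependent ℝ (fun β : {x // x ∈ simples} => (β : V))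
  posRoots_nonneg_comb : ∀ α ∈ posRoots, ∃ c : V → ℝ,
    (∀ β ∈ simples, 0 ≤ c β) ∧ α = ∑ β ∈ simples, c β • β
  -- the Weyl group, acting on V and V∨, generated by the reflections s_α
  s : V → W
  actV : W →* V ≃ₗ[ℝ] V
  actVd : W →* Vd ≃ₗ[ℝ] Vd
  actV_s : ∀ α ∈ roots, ∀ v : V, actV (s α) v = v - pairR v (cv α) • α
  actVd_s : ∀ α ∈ roots, ∀ u : Vd, actVd (s α) u = u - pairR α u • cv α
  act_pair : ∀ (w : W) (v : V) (u : Vd), pairR (actV w v) (actVd w u) = pairR v u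
  actV_faithful : ∀ w : W, (∀ v : V, actV w v = v) → w = 1
  gen_by_refl : Subgroup.closure (s '' roots) = (⊤ : Subgroup W)
  actV_roots : ∀ (w : W), ∀ α ∈ roots, actV w α ∈ roots
  -- the longest element
  w0 : W
  w0_neg : ∀ α ∈ posRoots, -(actV w0 α) ∈ posRoots
  w0_unique : ∀ w : W, (∀ α ∈ posRoots, -(actV w α) ∈ posRoots) → w = w0
  -- the parameter function k (extended W-invariantly to all roots)
  kpar : V → ℝ
  kpar_invariant : ∀ (w : W), ∀ α ∈ roots, kpar (actV w α) = kpar α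
  -- complexifications of V and V∨, with real and imaginary parts
  iV : V →+ VC
  iVd : Vd →+ VdC
  iV_smul : ∀ (r : ℝ) (v : V), iV (r • v) = (r : ℂ) • iV v
  iVd_smul : ∀ (r : ℝ) (u : Vd), iVd (r • u) = (r : ℂ) • iVd u
  reV : VC →+ V
  imV : VC →+ V
  reVd : VdC →+ Vd
  imVd : VdC →+ Vd
  reV_iV : ∀ v : V, reV (iV v) = v
  imV_iV : ∀ v : V, imV (iV v) = 0
  reVd_iVd : ∀ u : Vd, reVd (iVd u) = u
  imVd_iVd : ∀ u : Vd, imVd (iVd u) = 0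
  vc_decomp : ∀ x : VC, x = iV (reV x) + Complex.I • iV (imV x)
  vdc_decomp : ∀ y : VdC, y = iVd (reVd y) + Complex.I • iVd (imVd y)
  reV_real_smul : ∀ (r : ℝ) (x : VC), reV ((r : ℂ) • x) = r • reV x
  imV_real_smul : ∀ (r : ℝ) (x : VC), imV ((r : ℂ) • x) = r • imV x
  reVd_real_smul : ∀ (r : ℝ) (y : VdC), reVd ((r : ℂ) • y) = r • reVd y
  imVd_real_smul : ∀ (r : ℝ) (y : VdC), imVd ((r : ℂ) • y) = r • imVd y
  -- the complex bilinear extension of the pairing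
  pairC : VC → VdC → ℂ
  pairC_add_left : ∀ x x' y, pairC (x + x') y = pairC x y + pairC x' y
  pairC_add_right : ∀ x y y', pairC x (y + y') = pairC x y + pairC x y'
  pairC_smul_left : ∀ (c : ℂ) x y, pairC (c • x) y = c * pairC x y
  pairC_smul_right : ∀ (c : ℂ) x y, pairC x (c • y) = c * pairC x y
  pairC_compat : ∀ (v : V) (u : Vd), pairC (iV v) (iVd u) = (pairR v u : ℂ)
  -- the complexified Weyl group actions
  actVC : W →* VC ≃ₗ[ℂ] VC
  actVdC : W →* VdC ≃ₗ[ℂ] VdC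
  actVC_iV : ∀ (w : W) (v : V), actVC w (iV v) = iV (actV w v)
  actVdC_iVd : ∀ (w : W) (u : Vd), actVdC w (iVd u) = iVd (actVd w u)
  -- the graded affine Hecke algebra H: elements t_w and the subalgebra S(V_ℂ)
  t : W → H
  t_one : t 1 = 1
  t_mul : ∀ w w', t w * t w' = t (w * w')
  θ : VC → H
  θ_add : ∀ x y, θ (x + y) = θ x + θ y
  θ_smul : ∀ (c : ℂ) (x : VC), θ (c • x) = c • θ x
  θ_comm : ∀ x y, θ x * θ y = θ y * θ x
  -- the graded Hecke algebra cross relation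
  cross_rel : ∀ α ∈ simples, ∀ ω : VC,
    θ ω * t (s α) = t (s α) * θ (actVC (s α) ω)
      + algebraMap ℂ H ((kpar α : ℂ) * pairC ω (iVd (cv α)))
  -- H ≅ ℂ[W] ⊗ S(V_ℂ) as a (ℂ[W], S(V_ℂ))-bimodule
  pbw_span : ∀ h : H, ∃ c : W → Algebra.adjoin ℂ (Set.range θ),
    h = ∑ w : W, t w * (c w : H)
  pbw_indep : ∀ c : W → Algebra.adjoin ℂ (Set.range θ),
    ∑ w : W, t w * (c w : H) = 0 → ∀ w, c w = 0
  -- the subalgebra generated by θ(V_ℂ) is the symmetric algebra S(V_ℂ)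
  poly_univ : ∀ (B : Type) [CommRing B] [Algebra ℂ B] (f : VC → B),
    (∀ x y, f (x + y) = f x + f y) → (∀ (c : ℂ) x, f (c • x) = c • f x) →
    ∃! g : Algebra.adjoin ℂ (Set.range θ) →ₐ[ℂ] B,
      ∀ x : VC, g ⟨θ x, Algebra.subset_adjoin ⟨x, rfl⟩⟩ = f x

attribute [instance] GHA.addV GHA.modV GHA.fdV GHA.addVd GHA.modVd GHA.fdVd
  GHA.deqV GHA.deqW GHA.addVC GHA.modVC GHA.addVdC GHA.modVdC GHA.grpW GHA.finW
  GHA.ringH GHA.algH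

namespace GHA

/-- Complex conjugation on V_ℂ. -/
def conjVC (D : GHA) (x : D.VC) : D.VC := D.iV (D.reV x) - Complex.I • D.iV (D.imV x)

/-- Complex conjugation on V∨_ℂ. -/
def conjVdC (D : GHA) (y : D.VdC) : D.VdC := D.iVd (D.reVd y) - Complex.I • D.iVd (D.imVd y)

/-- The bullet operation: conjugate-linear anti-automorphism with t_w ↦ t_{w⁻¹},
ω ↦ conj ω. -/
structure IsBullet (D : GHA) (f : D.H → D.H) : Prop where
  map_add : ∀ x y, f (x + y) = f x + f y
  map_smul : ∀ (c : ℂ) (x : D.H), f (c • x) = (starRingEnd ℂ) c • f x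
  map_mul : ∀ x y, f (x * y) = f y * f x
  map_one : f 1 = 1
  map_t : ∀ w : D.W, f (D.t w) = D.t w⁻¹
  map_theta : ∀ x : D.VC, f (D.θ x) = D.θ (D.conjVC x)

/-- The star operation: conjugate-linear anti-automorphism with t_w ↦ t_{w⁻¹},
ω ↦ −t_{w₀}·conj(w₀(ω))·t_{w₀}. -/
structure IsStar (D : GHA) (f : D.H → D.H) : Prop where
  map_add : ∀ x y, f (x + y) = f x + f y
  map_smul : ∀ (c : ℂ) (x : D.H), f (c • x) = (starRingEnd ℂ) c • f x
  map_mul : ∀ x y, f (x * y) = f y * f x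
  map_one : f 1 = 1
  map_t : ∀ w : D.W, f (D.t w) = D.t w⁻¹
  map_theta : ∀ x : D.VC,
    f (D.θ x) = -(D.t D.w0 * D.θ (D.conjVC (D.actVC D.w0 x)) * D.t D.w0)

/-- The automorphism δ: t_w ↦ t_{w₀ww₀}, ω ↦ −w₀(ω). -/
structure IsDelta (D : GHA) (f : D.H → D.H) : Prop where
  map_add : ∀ x y, f (x + y) = f x + f y
  map_smul : ∀ (c : ℂ) (x : D.H), f (c • x) = c • f x
  map_mul : ∀ x y, f (x * y) = f x * f y
  map_one : f 1 = 1
  map_t : ∀ w : D.W, f (D.t w) = D.t (D.w0 * w * D.w0)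
  map_theta : ∀ x : D.VC, f (D.θ x) = -(D.θ (D.actVC D.w0 x))

/-- The standing assumption k_{−w₀(α)} = k_α for α ∈ Π. -/
def KSymm (D : GHA) : Prop := ∀ α ∈ D.simples, D.kpar (-(D.actV D.w0 α)) = D.kpar α

section Forms

variable {X : Type} [AddCommGroup X] [Module ℂ X]

/-- Sesquilinear form (conjugate-linear in the first variable). -/
def SesqForm (B : X → X → ℂ) : Prop :=
  (∀ x x' y, B (x + x') y = B x y + B x' y) ∧
  (∀ x y y', B x (y + y') = B x y + B x y') ∧
  (∀ (c : ℂ) (x y : X), B (c • x) y = (starRingEnd ℂ) c * B x y) ∧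
  (∀ (c : ℂ) (x y : X), B x (c • y) = c * B x y)

/-- Hermitian form. -/
def HermForm (B : X → X → ℂ) : Prop := ∀ x y, B x y = (starRingEnd ℂ) (B y x)

/-- κ-invariance of a form: ⟨π(h)x, y⟩ = ⟨x, π(κ(h))y⟩. -/
def InvForm (D : GHA) (π : D.H →ₐ[ℂ] Module.End ℂ X) (κ : D.H → D.H)
    (B : X → X → ℂ) : Prop :=
  ∀ (h : D.H) (x y : X), B (π h x) y = B x (π (κ h) y)

end Forms

/-- Irreducibility of a representation of a ℂ-algebra A on X. -/
def IsIrrRep (A : Type) [Ring A] [Algebra ℂ A] {X : Type} [AddCommGroup X]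
    [Module ℂ X] (π : A →ₐ[ℂ] Module.End ℂ X) : Prop :=
  Nontrivial X ∧ ∀ U : Submodule ℂ X, (∀ (a : A), ∀ x ∈ U, π a x ∈ U) → U = ⊥ ∨ U = ⊤

/-- Generalized weight space for a commuting family of operators indexed by V_ℂ. -/
def wtAux (D : GHA) {X : Type} [AddCommGroup X] [Module ℂ X]
    (T : D.VC → Module.End ℂ X) (lam : D.VdC) : Submodule ℂ X where
  carrier := {x | ∀ ω : D.VC, ∃ n : ℕ,
    ((T ω - D.pairC ω lam • (1 : Module.End ℂ X)) ^ n) x = 0}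
  zero_mem' := fun ω => ⟨1, by simp⟩
  add_mem' := by
    intro a b ha hb
    intro ω
    obtain ⟨n, hn⟩ := ha ω
    obtain ⟨m, hm⟩ := hb ω
    refine ⟨n + m, ?_⟩
    have hA : ((T ω - D.pairC ω lam • (1 : Module.End ℂ X)) ^ (n + m)) a = 0 := by
      rw [add_comm, pow_add, Module.End.mul_apply, hn, map_zero]
    have hB : ((T ω - D.pairC ω lam • (1 : Module.End ℂ X)) ^ (n + m)) b = 0 := by
      rw [pow_add, Module.End.mul_apply, hm, map_zero]
    rw [map_add, hA, hB, add_zero]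
  smul_mem' := by
    intro c a ha ω
    obtain ⟨n, hn⟩ := ha ω
    exact ⟨n, by rw [map_smul, hn, smul_zero]⟩

/-- Generalized A-weight space X_λ of an H-module. -/
def wtH (D : GHA) {X : Type} [AddCommGroup X] [Module ℂ X]
    (π : D.H →ₐ[ℂ] Module.End ℂ X) (lam : D.VdC) : Submodule ℂ X :=
  D.wtAux (fun ω => π (D.θ ω)) lam

/-- The set Ω(X) of A-weights of an H-module. -/
def OmegaH (D : GHA) {X : Type} [AddCommGroup X] [Module ℂ X]
    (π : D.H →ₐ[ℂ] Module.End ℂ X) : Set D.VdC :=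
  {lam | D.wtH π lam ≠ ⊥}

/-- Casselman's criterion for temperedness. -/
def IsTempered (D : GHA) {X : Type} [AddCommGroup X] [Module ℂ X]
    (π : D.H →ₐ[ℂ] Module.End ℂ X) : Prop :=
  ∀ lam ∈ D.OmegaH π, ∀ ω : D.V,
    (∀ α ∈ D.simples, 0 < D.pairR ω (D.cv α)) → D.pairR ω (D.reVd lam) ≤ 0

section Parabolic

variable (D : GHA) (PiM : Finset D.V)

/-- The parabolic subgroup W_M. -/
def WM : Subgroup D.W := Subgroup.closure (D.s '' (PiM : Set D.V))

/-- The positive roots R⁺_M lying in the span of Π_M. -/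
def RplusM : Set D.V :=
  {α | α ∈ D.posRoots ∧ α ∈ Submodule.span ℝ (PiM : Set D.V)}

/-- x is the minimal length representative of x·W_M, i.e. x(R⁺_M) ⊆ R⁺. -/
def IsMinRep (x : D.W) : Prop := ∀ α ∈ D.RplusM PiM, D.actV x α ∈ D.posRoots

/-- The set J_M of minimal length coset representatives. -/
abbrev JM : Type := {x : D.W // D.IsMinRep PiM x}

/-- The parabolic subalgebra H_M. -/
def HM : Subalgebra ℂ D.H :=
  Algebra.adjoin ℂ (Set.range D.θ ∪ (D.t '' ((D.WM PiM : Subgroup D.W) : Set D.W)))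

/-- t_w as an element of H_M, for w ∈ W_M. -/
def tM (w : D.W) (hw : w ∈ D.WM PiM) : D.HM PiM :=
  ⟨D.t w, Algebra.subset_adjoin (Or.inr ⟨w, hw, rfl⟩)⟩

/-- θ(ω) as an element of H_M. -/
def θM (x : D.VC) : D.HM PiM :=
  ⟨D.θ x, Algebra.subset_adjoin (Or.inl ⟨x, rfl⟩)⟩

/-- Π_{δ(M)} = −w₀(Π_M). -/
def deltaSimples : Finset D.V := PiM.image (fun α => -(D.actV D.w0 α))

/-- w is the longest element of W_M. -/
def IsLongest (w : D.W) : Prop :=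
  w ∈ D.WM PiM ∧ ∀ α ∈ D.RplusM PiM, -(D.actV w α) ∈ D.RplusM PiM

end Parabolic

/-- The unique factorization z = c_M(z)·m_M(z) with c_M(z) minimal in z·W_M and
m_M(z) ∈ W_M. -/
structure CosetData (D : GHA) (PiM : Finset D.V) where
  c : D.W → D.W
  m : D.W → D.W
  c_min : ∀ z, D.IsMinRep PiM (c z)
  m_mem : ∀ z, m z ∈ D.WM PiM
  factor : ∀ z, z = c z * m z
  uniq : ∀ (z c' m' : D.W), D.IsMinRep PiM c' → m' ∈ D.WM PiM → z = c' * m' →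
    c' = c z ∧ m' = m z

/-- The defining formulas for the H-action on the parabolically induced module
X(M,σ) = H ⊗_{H_M} U, realized on ⊕_{x ∈ J_M} U. -/
def IsInducedAction (D : GHA) (PiM : Finset D.V) (cd : CosetData D PiM)
    {U : Type} [AddCommGroup U] [Module ℂ U]
    (σ : D.HM PiM →ₐ[ℂ] Module.End ℂ U)
    (πI : D.H →ₐ[ℂ] Module.End ℂ (D.JM PiM → U)) : Prop :=
  (∀ (z : D.W) (x : D.JM PiM) (v : U),
      πI (D.t z) (Pi.single x v) =
        Pi.single (⟨cd.c (z * x.1), cd.c_min _⟩ : D.JM PiM)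
          (σ (D.tM PiM (cd.m (z * x.1)) (cd.m_mem _)) v)) ∧
  (∀ (ω : D.VC) (x : D.JM PiM) (v : U),
      πI (D.θ ω) (Pi.single x v) =
        Pi.single x (σ (D.θM PiM (D.actVC x.1⁻¹ ω)) v) +
          ∑ β ∈ D.posRoots.filter (fun β => -(D.actV x.1⁻¹ β) ∈ D.posRoots),
            ((D.kpar β : ℂ) * D.pairC ω (D.iVd (D.cv β))) •
              (Pi.single (⟨cd.c (D.s β * x.1), cd.c_min _⟩ : D.JM PiM)
                (σ (D.tM PiM (cd.m (D.s β * x.1)) (cd.m_mem _)) v) : D.JM PiM → U))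

end GHA

/-
The Iwahori–Matsumoto involution is `t_w a ↦ sign(w) t_w a(-ω)` on the PBW basis, with
`sign(w) = det(w|V)`. It is multiplicative: compatibility with left multiplication by `t_w` is
immediate, and `θ(ω)` is pushed through `t_{s_α}` by the cross relation, whose scalar term
`k_α ⟨ω, α∨⟩` is unchanged when both `t_{s_α}` and `ω` change sign. It is unique because `θ(V_ℂ)`
and the `t_{s_α}`, `α ∈ Π`, generate `H`, the simple reflections generating `W`.

Twisting by `τ` negates weights. So if `X` and `X ∘ τ` are tempered, then `⟨ω, Re λ⟩` is both
`≤ 0` and `≥ 0` for every strictly dominant `ω`. These `ω` form a nonempty open cone (it contains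
`2ρ`), hence `Re λ = 0`.
-/

theorem exists_symm_pos_invariant_bilinForm {G V : Type*} [Group G] [Fintype G] [AddCommGroup V]
    [Module ℝ V] [FiniteDimensional ℝ V] (ρ : G →* V ≃ₗ[ℝ] V) :
    ∃ B : LinearMap.BilinForm ℝ V, (∀ u v, B u v = B v u) ∧ (∀ v, v ≠ 0 → 0 < B v v) ∧
      ∀ g u v, B (ρ g u) (ρ g v) = B u v := by
  let e := (Module.finBasis ℝ V).equivFun
  have he : ∀ v, e v ⬝ᵥ e v = e v ⬝ᵥ star (e v) := fun v => by rw [star_trivial]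
  let B₀ : LinearMap.BilinForm ℝ V :=
    (dotProductBilin ℝ ℝ).compl₁₂ e.toLinearMap e.toLinearMap
  refine ⟨∑ g, B₀.compl₁₂ (ρ g).toLinearMap (ρ g).toLinearMap, fun u v => ?_, fun v hv => ?_,
    fun g u v => ?_⟩
  · simp only [B₀, LinearMap.sum_apply, LinearMap.compl₁₂_apply, LinearEquiv.coe_coe,
      dotProductBilin_apply_apply]
    exact Finset.sum_congr rfl fun g _ => dotProduct_comm _ _
  · simp only [B₀, LinearMap.sum_apply, LinearMap.compl₁₂_apply, LinearEquiv.coe_coe,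
      dotProductBilin_apply_apply]
    refine Finset.sum_pos' (fun g _ => by rw [he]; exact dotProduct_self_star_nonneg _)
      ⟨1, Finset.mem_univ _, ?_⟩
    rw [he]
    exact Matrix.dotProduct_self_star_pos_iff.mpr (by simpa using hv)
  · simp only [B₀, LinearMap.sum_apply, LinearMap.compl₁₂_apply, LinearEquiv.coe_coe,
      dotProductBilin_apply_apply, ← LinearEquiv.mul_apply, ← map_mul]
    exact Fintype.sum_equiv (Equiv.mulRight g) _ _ (fun _ => rfl)

theorem Module.det_preReflection {R M : Type*} [Field R] [AddCommGroup M] [Module R M]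
    [FiniteDimensional R M] {x : M} {f : Module.Dual R M} (h : f x = 2) :
    LinearMap.det (Module.preReflection x f) = -1 := by
  classical
  let b := Module.finBasis R M
  have hmat : LinearMap.toMatrix b b (Module.preReflection x f) =
      1 + Matrix.replicateCol Unit (fun i => -b.repr x i) *
        Matrix.replicateRow Unit (fun j => f (b j)) := by
    ext i j
    simp only [LinearMap.toMatrix_apply, Module.preReflection_apply, map_sub, map_smul,
      Finsupp.sub_apply, Finsupp.smul_apply, smul_eq_mul, Module.Basis.repr_self,
      Finsupp.single_apply, Matrix.add_apply, Matrix.one_apply, Matrix.mul_apply,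
      Matrix.replicateCol_apply, Matrix.replicateRow_apply, Finset.univ_unique,
      Finset.sum_singleton, eq_comm (a := j)]
    ring
  have hfx : f x = ∑ j, f (b j) * b.repr x j := by
    conv_lhs => rw [← b.sum_repr x]
    simp only [map_sum, map_smul, smul_eq_mul, mul_comm]
  rw [← LinearMap.det_toMatrix b, hmat, Matrix.det_one_add_replicateCol_mul_replicateRow,
    dotProduct]
  simp only [mul_neg, Finset.sum_neg_distrib, ← hfx, h]
  norm_num

lemma Module.End.neg_pow_apply_eq_zero_iff {R M : Type*} [CommRing R] [AddCommGroup M]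
    [Module R M] (S : Module.End R M) (n : ℕ) (x : M) :
    ((-S) ^ n) x = 0 ↔ (S ^ n) x = 0 := by
  rcases neg_one_pow_eq_or (Module.End R M) n with h | h <;>
    simp [neg_pow, h]

theorem LinearMap.eq_zero_of_forall_pos_imp_eq_zero {ι V : Type*} [AddCommGroup V] [Module ℝ V]
    (s : Finset ι) (f : ι → V →ₗ[ℝ] ℝ) {g : V →ₗ[ℝ] ℝ} {v₀ : V} (hv₀ : ∀ i ∈ s, 0 < f i v₀)
    (hg : ∀ v, (∀ i ∈ s, 0 < f i v) → g v = 0) : g = 0 := by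
  ext v
  -- `v + t v₀` lies in the cone for `t` large
  obtain ⟨t, ht⟩ := ((Filter.eventually_all_finset s).2 fun i hi =>
    (Filter.tendsto_atTop_add_const_left _ (f i v)
      (Filter.tendsto_id.atTop_mul_const (hv₀ i hi))).eventually_gt_atTop 0).exists
  have := hg (v + t • v₀) fun i hi => by simpa [mul_comm] using ht i hi
  rwa [map_add, map_smul, hg v₀ hv₀, smul_zero, add_zero] at this

namespace GHA

variable (D : GHA)

lemma simple_mem_roots {α : D.V} (hα : α ∈ D.simples) : α ∈ D.roots :=
  D.posRoots_subset (D.simples_subset hα)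

lemma actV_mul_apply (u w : D.W) (v : D.V) : D.actV u (D.actV w v) = D.actV (u * w) v := by
  rw [map_mul, LinearEquiv.mul_apply]

lemma actV_injective : Function.Injective D.actV := by
  intro u w h
  rw [← mul_inv_eq_one]
  refine D.actV_faithful _ fun v => ?_
  rw [← D.actV_mul_apply, h, D.actV_mul_apply, mul_inv_cancel, map_one]
  rfl

lemma actV_s_self {α : D.V} (hα : α ∈ D.roots) : D.actV (D.s α) α = -α := by
  rw [D.actV_s α hα, D.pair_cv_self α hα, two_smul, sub_add_cancel_left]

lemma actV_s_actV_s {α : D.V} (hα : α ∈ D.roots) (v : D.V) :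
    D.actV (D.s α) (D.actV (D.s α) v) = v := by
  rw [D.actV_s α hα, D.actV_s α hα]
  simp only [map_sub, map_smul, LinearMap.sub_apply, LinearMap.smul_apply, smul_eq_mul,
    D.pair_cv_self α hα]
  module

lemma s_inv {α : D.V} (hα : α ∈ D.roots) : (D.s α)⁻¹ = D.s α := by
  refine inv_eq_of_mul_eq_one_left (D.actV_injective (LinearEquiv.ext fun v => ?_))
  rw [← D.actV_mul_apply, D.actV_s_actV_s hα, map_one]
  rfl

lemma eq_smul_of_actV_s_notMem_posRoots {α β : D.V} (hα : α ∈ D.simples)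
    (hβ : β ∈ D.posRoots) (hsβ : D.actV (D.s α) β ∉ D.posRoots) :
    ∃ r : ℝ, 0 < r ∧ β = r • α := by
  have hαR := D.simple_mem_roots hα
  have hβR := D.posRoots_subset hβ
  have hneg : -(β - D.pairR β (D.cv α) • α) ∈ D.posRoots := by
    rw [← D.actV_s α hαR]
    exact (D.roots_pos_or_neg _ (D.actV_roots _ _ hβR)).resolve_left hsβ
  obtain ⟨c, hc, hβc⟩ := D.posRoots_nonneg_comb β hβ
  obtain ⟨d, hd, hβd⟩ := D.posRoots_nonneg_comb _ hneg
  -- `β` and `-(s_α β)` are nonnegative combinations of simple roots whose sum is a multiple of `α`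
  have hsum : ∑ γ ∈ D.simples, (c γ + d γ - if γ = α then D.pairR β (D.cv α) else 0) • γ = 0 := by
    simp only [sub_smul, add_smul, ite_smul, zero_smul, Finset.sum_sub_distrib,
      Finset.sum_add_distrib, Finset.sum_ite_eq', if_pos hα, ← hβc, ← hβd]
    abel
  have hli := linearIndependent_iff'.mp D.simples_linearIndependent Finset.univ
    (fun γ => c γ + d γ - if (γ : D.V) = α then D.pairR β (D.cv α) else 0)
    (by rw [← hsum, ← Finset.sum_coe_sort D.simples])
  have hc0 : ∀ γ ∈ D.simples, γ ≠ α → c γ = 0 := fun γ hγ hne => by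
    have := hli ⟨γ, hγ⟩ (Finset.mem_univ _)
    simp only [hne, if_false, sub_zero] at this
    linarith [hc γ hγ, hd γ hγ]
  have hβα : β = c α • α := by
    rw [hβc, Finset.sum_eq_single_of_mem α hα fun γ hγ hne => by rw [hc0 γ hγ hne, zero_smul]]
  refine ⟨c α, (hc α hα).lt_of_ne fun h => D.roots_ne_zero β hβR ?_, hβα⟩
  rw [hβα, ← h, zero_smul]

/-- `2ρ`. -/
def sumPosRoots : D.V := ∑ β ∈ D.posRoots, β

lemma pairR_sumPosRoots_cv_pos {α : D.V} (hα : α ∈ D.simples) :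
    0 < D.pairR D.sumPosRoots (D.cv α) := by
  have hαR := D.simple_mem_roots hα
  let p := D.pairR.flip (D.cv α)
  let Q := D.posRoots.filter fun β => D.actV (D.s α) β ∈ D.posRoots
  let P := D.posRoots.filter fun β => D.actV (D.s α) β ∉ D.posRoots
  -- `s_α` permutes `Q` and reverses the sign of `p`, so `Q` contributes nothing
  have hQ : ∑ β ∈ Q, p β = 0 := by
    refine Finset.sum_involution (fun β _ => D.actV (D.s α) β) (fun β hβ => ?_)
      (fun β hβ hne => ?_) (fun β hβ => ?_) (fun β _ => D.actV_s_actV_s hαR β)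
    · simp only [p, LinearMap.flip_apply, D.actV_s α hαR, map_sub, map_smul, smul_eq_mul,
        D.pair_cv_self α hαR]
      ring
    · rw [D.actV_s α hαR, Ne, sub_eq_self, smul_eq_zero, not_or]
      exact ⟨by simpa [p] using hne, D.roots_ne_zero α hαR⟩
    · simp only [Q, Finset.mem_filter, D.actV_s_actV_s hαR] at hβ ⊢
      exact hβ.symm
  have hP : 0 < ∑ β ∈ P, p β := by
    refine Finset.sum_pos (fun β hβ => ?_) ⟨α, ?_⟩
    · obtain ⟨hβ, hsβ⟩ := Finset.mem_filter.mp hβ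
      obtain ⟨r, hr, rfl⟩ := D.eq_smul_of_actV_s_notMem_posRoots hα hβ hsβ
      simp only [p, LinearMap.flip_apply, map_smul, smul_eq_mul, D.pair_cv_self α hαR]
      positivity
    · rw [Finset.mem_filter, D.actV_s_self hαR]
      exact ⟨D.simples_subset hα, D.posRoots_not_neg α (D.simples_subset hα)⟩
  have hsplit := Finset.sum_filter_add_sum_filter_not D.posRoots
    (fun β => D.actV (D.s α) β ∈ D.posRoots) p
  rw [hQ, zero_add] at hsplit
  have hp : D.pairR D.sumPosRoots (D.cv α) = ∑ β ∈ D.posRoots, p β := by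
    simp only [sumPosRoots, map_sum, LinearMap.sum_apply, p, LinearMap.flip_apply]
  exact hp ▸ hsplit ▸ hP

def invForm : LinearMap.BilinForm ℝ D.V := (exists_symm_pos_invariant_bilinForm D.actV).choose

lemma invForm_comm (u v : D.V) : D.invForm u v = D.invForm v u :=
  (exists_symm_pos_invariant_bilinForm D.actV).choose_spec.1 u v

lemma invForm_self_pos {v : D.V} (hv : v ≠ 0) : 0 < D.invForm v v :=
  (exists_symm_pos_invariant_bilinForm D.actV).choose_spec.2.1 v hv

lemma invForm_actV (w : D.W) (u v : D.V) :
    D.invForm (D.actV w u) (D.actV w v) = D.invForm u v :=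
  (exists_symm_pos_invariant_bilinForm D.actV).choose_spec.2.2 w u v

lemma pairR_cv_eq {α : D.V} (hα : α ∈ D.roots) (v : D.V) :
    D.pairR v (D.cv α) = 2 * D.invForm v α / D.invForm α α := by
  have hαα := D.invForm_self_pos (D.roots_ne_zero α hα)
  have h := D.invForm_actV (D.s α) v α
  simp only [D.actV_s_self hα, D.actV_s α hα, map_neg, map_sub, map_smul, LinearMap.sub_apply,
    LinearMap.smul_apply, smul_eq_mul] at h
  field_simp
  linarith

lemma s_eq_of_eq_smul {α β : D.V} (hα : α ∈ D.roots) (hβ : β ∈ D.roots) {r : ℝ} (hr : r ≠ 0)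
    (hβα : β = r • α) : D.s β = D.s α := by
  refine D.actV_injective (LinearEquiv.ext fun v => ?_)
  have hαα := D.invForm_self_pos (D.roots_ne_zero α hα)
  rw [D.actV_s β hβ, D.actV_s α hα, D.pairR_cv_eq hβ, D.pairR_cv_eq hα, hβα, smul_smul]
  simp only [map_smul, LinearMap.smul_apply, smul_eq_mul]
  congr 2
  field_simp

lemma s_actV (w : D.W) {β : D.V} (hβ : β ∈ D.roots) :
    D.s (D.actV w β) = w * D.s β * w⁻¹ := by
  refine D.actV_injective (LinearEquiv.ext fun v => ?_)
  obtain ⟨u, rfl⟩ : ∃ u, D.actV w u = v := ⟨D.actV w⁻¹ v, by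
    rw [D.actV_mul_apply, mul_inv_cancel, map_one]; rfl⟩
  rw [D.actV_s _ (D.actV_roots w β hβ), map_mul, map_mul, LinearEquiv.mul_apply,
    LinearEquiv.mul_apply, D.actV_mul_apply w⁻¹, inv_mul_cancel, map_one, LinearEquiv.coe_one,
    id, D.actV_s β hβ, map_sub, map_smul, D.pairR_cv_eq (D.actV_roots w β hβ), D.pairR_cv_eq hβ,
    D.invForm_actV, D.invForm_actV]

lemma invForm_simple_sumPosRoots_pos {γ : D.V} (hγ : γ ∈ D.simples) :
    0 < D.invForm γ D.sumPosRoots := by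
  have hγγ := D.invForm_self_pos (D.roots_ne_zero γ (D.simple_mem_roots hγ))
  have h := D.pairR_sumPosRoots_cv_pos hγ
  rw [D.pairR_cv_eq (D.simple_mem_roots hγ), D.invForm_comm] at h
  exact pos_of_mul_pos_right ((div_pos_iff_of_pos_right hγγ).mp h) zero_le_two

lemma exists_simple_pairR_cv_pos {β : D.V} (hβ : β ∈ D.posRoots) :
    ∃ γ ∈ D.simples, 0 < D.pairR β (D.cv γ) := by
  obtain ⟨c, hc, hβc⟩ := D.posRoots_nonneg_comb β hβ
  have hββ := D.invForm_self_pos (D.roots_ne_zero β (D.posRoots_subset hβ))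
  by_contra! h
  have : D.invForm β β ≤ 0 := by
    conv_lhs => arg 2; rw [hβc]
    simp only [map_sum, map_smul, smul_eq_mul]
    refine Finset.sum_nonpos fun γ hγ => mul_nonpos_of_nonneg_of_nonpos (hc γ hγ) ?_
    have hγγ := D.invForm_self_pos (D.roots_ne_zero γ (D.simple_mem_roots hγ))
    have := h γ hγ
    rw [D.pairR_cv_eq (D.simple_mem_roots hγ), div_nonpos_iff] at this
    rcases this with ⟨-, h'⟩ | ⟨h', -⟩
    · exact absurd h' (not_le.mpr hγγ)
    · linarith
  linarith

/-- Induction on the height `β ↦ (β, 2ρ)`: a positive root that is not simple is moved by some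
simple reflection to a positive root of smaller height. -/
lemma s_mem_closure_simples {β : D.V} (hβ : β ∈ D.roots) :
    D.s β ∈ Subgroup.closure (D.s '' D.simples) := by
  classical
  set W₀ := Subgroup.closure (D.s '' D.simples)
  have hsimple : ∀ γ ∈ D.simples, D.s γ ∈ W₀ := fun γ hγ => Subgroup.subset_closure ⟨γ, hγ, rfl⟩
  suffices hpos : ∀ β ∈ D.posRoots, D.s β ∈ W₀ by
    rcases D.roots_pos_or_neg β hβ with h | h
    · exact hpos β h
    · rw [D.s_eq_of_eq_smul (D.posRoots_subset h) hβ (r := -1) (by norm_num) (by simp)]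
      exact hpos _ h
  by_contra! hbad
  obtain ⟨β, hβS, hmin⟩ := (D.posRoots.filter fun β => D.s β ∉ W₀).exists_min_image
    (fun β => D.invForm β D.sumPosRoots) (by simpa [Finset.Nonempty] using hbad)
  obtain ⟨hβ, hβW⟩ := Finset.mem_filter.mp hβS
  have hβR := D.posRoots_subset hβ
  obtain ⟨γ, hγ, hβγ⟩ := D.exists_simple_pairR_cv_pos hβ
  have hγR := D.simple_mem_roots hγ
  by_cases hprop : ∃ r : ℝ, β = r • γ
  · obtain ⟨r, hr⟩ := hprop
    have hr0 : r ≠ 0 := by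
      rintro rfl
      exact D.roots_ne_zero β hβR (by rw [hr, zero_smul])
    exact hβW (D.s_eq_of_eq_smul hγR hβR hr0 hr ▸ hsimple γ hγ)
  · have hsβ : D.actV (D.s γ) β ∈ D.posRoots := by
      by_contra h
      obtain ⟨r, -, hr⟩ := D.eq_smul_of_actV_s_notMem_posRoots hγ hβ h
      exact hprop ⟨r, hr⟩
    have hsβW : D.s (D.actV (D.s γ) β) ∉ W₀ := by
      rw [D.s_actV _ hβR, D.s_inv hγR]
      intro h
      refine hβW ?_
      have hss : D.s γ * D.s γ = 1 := mul_eq_one_iff_eq_inv.mpr (D.s_inv hγR).symm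
      have hβ' : D.s γ * (D.s γ * D.s β * D.s γ) * D.s γ = D.s β := by
        rw [← mul_assoc, ← mul_assoc, hss, one_mul, mul_assoc, hss, mul_one]
      exact hβ' ▸ mul_mem (mul_mem (hsimple γ hγ) h) (hsimple γ hγ)
    have hlt : D.invForm (D.actV (D.s γ) β) D.sumPosRoots < D.invForm β D.sumPosRoots := by
      rw [D.actV_s γ hγR, map_sub, map_smul, LinearMap.sub_apply, LinearMap.smul_apply,
        smul_eq_mul, sub_lt_self_iff]
      exact mul_pos hβγ (D.invForm_simple_sumPosRoots_pos hγ)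
    exact (hmin _ (Finset.mem_filter.mpr ⟨hsβ, hsβW⟩)).not_gt hlt

lemma closure_s_simples_eq_top : Subgroup.closure (D.s '' D.simples) = ⊤ :=
  eq_top_iff.mpr (D.gen_by_refl ▸ (Subgroup.closure_le _).mpr
    (by rintro _ ⟨β, hβ, rfl⟩; exact D.s_mem_closure_simples hβ))

def sign : D.W →* ℂ :=
  Complex.ofRealHom.toMonoidHom.comp ((Units.coeHom ℝ).comp (LinearEquiv.det.comp D.actV))

lemma sign_apply (w : D.W) : D.sign w = ((LinearMap.det (D.actV w : D.V →ₗ[ℝ] D.V) : ℝ) : ℂ) := by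
  simp [sign]

lemma sign_s {α : D.V} (hα : α ∈ D.roots) : D.sign (D.s α) = -1 := by
  have : (D.actV (D.s α) : D.V →ₗ[ℝ] D.V) = Module.preReflection α (D.pairR.flip (D.cv α)) :=
    LinearMap.ext (D.actV_s α hα)
  rw [D.sign_apply, this, Module.det_preReflection (x := α) (D.pair_cv_self α hα)]
  norm_num

lemma sign_mul_self (w : D.W) : D.sign w * D.sign w = 1 := by
  have hd : LinearMap.det (D.actV w : D.V →ₗ[ℝ] D.V) ^ Fintype.card D.W = 1 := by
    rw [← LinearEquiv.coe_det, ← Units.val_pow_eq_pow_val, ← map_pow, ← map_pow,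
      pow_card_eq_one, map_one, map_one, Units.val_one]
  have habs := (abs_pow_eq_one _ Fintype.card_ne_zero).mp (by rw [hd, abs_one])
  rw [D.sign_apply, ← Complex.ofReal_mul, ← abs_mul_abs_self, habs, mul_one, Complex.ofReal_one]

lemma t_mem_of_forall_simples {S : Subalgebra ℂ D.H} (hS : ∀ α ∈ D.simples, D.t (D.s α) ∈ S)
    (w : D.W) : D.t w ∈ S := by
  have hw : w ∈ Subgroup.closure (D.s '' D.simples) :=
    D.closure_s_simples_eq_top ▸ Subgroup.mem_top w
  induction hw using Subgroup.closure_induction'' with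
  | mem _ h =>
    obtain ⟨α, hα, rfl⟩ := h
    exact hS α hα
  | inv_mem _ h =>
    obtain ⟨α, hα, rfl⟩ := h
    rw [D.s_inv (D.simple_mem_roots hα)]
    exact hS α hα
  | one => exact D.t_one ▸ S.one_mem
  | mul u v _ _ hu hv => exact D.t_mul u v ▸ mul_mem hu hv

/-- The polynomial subalgebra `S(V_ℂ)` of `H`. -/
abbrev A : Subalgebra ℂ D.H := Algebra.adjoin ℂ (Set.range D.θ)

def θA : D.VC →ₗ[ℂ] D.A where
  toFun x := ⟨D.θ x, Algebra.subset_adjoin ⟨x, rfl⟩⟩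
  map_add' x y := Subtype.ext (D.θ_add x y)
  map_smul' c x := Subtype.ext (D.θ_smul c x)

lemma coe_θA (x : D.VC) : (D.θA x : D.H) = D.θ x := rfl

lemma existsUnique_algHom_A (f : D.VC →ₗ[ℂ] D.A) :
    ∃! g : D.A →ₐ[ℂ] D.A, ∀ x, g (D.θA x) = f x := by
  have : IsMulCommutative D.A := Algebra.isMulCommutative_adjoin ℂ
    (by rintro _ ⟨x, rfl⟩ _ ⟨y, rfl⟩; exact D.θ_comm x y)
  let _ : CommRing D.A := { (inferInstance : Ring D.A) with mul_comm := mul_comm' }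
  exact D.poly_univ D.A f f.map_add f.map_smul

def negA : D.A →ₐ[ℂ] D.A := (D.existsUnique_algHom_A (-D.θA)).exists.choose

lemma negA_θA (x : D.VC) : D.negA (D.θA x) = -D.θA x :=
  (D.existsUnique_algHom_A (-D.θA)).exists.choose_spec x

lemma negA_negA (a : D.A) : D.negA (D.negA a) = a := by
  have : D.negA.comp D.negA = AlgHom.id ℂ D.A :=
    (D.existsUnique_algHom_A D.θA).unique (fun x => by simp [negA_θA]) (fun _ => rfl)
  exact AlgHom.congr_fun this a

def pbw : (D.W → D.A) →ₗ[ℂ] D.H :=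
  ∑ w, LinearMap.mulLeft ℂ (D.t w) ∘ₗ D.A.val.toLinearMap ∘ₗ LinearMap.proj w

lemma pbw_apply (c : D.W → D.A) : D.pbw c = ∑ w, D.t w * c w := by
  simp [pbw]

lemma pbw_single (w : D.W) (a : D.A) : D.pbw (Pi.single w a) = D.t w * a := by
  rw [pbw_apply, Finset.sum_eq_single w (fun u _ hu => by simp [hu]) (by simp), Pi.single_eq_same]

lemma pbw_bijective : Function.Bijective D.pbw :=
  ⟨(injective_iff_map_eq_zero _).mpr fun c hc =>
      funext (D.pbw_indep c ((D.pbw_apply c).symm.trans hc)),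
    fun h => (D.pbw_span h).imp fun c hc => (D.pbw_apply c).trans hc.symm⟩

def pbwEquiv : (D.W → D.A) ≃ₗ[ℂ] D.H := LinearEquiv.ofBijective D.pbw D.pbw_bijective

lemma linearMap_ext_t_mul {M : Type*} [AddCommGroup M] [Module ℂ M] {E₁ E₂ : D.H →ₗ[ℂ] M}
    (h : ∀ w (a : D.A), E₁ (D.t w * a) = E₂ (D.t w * a)) : E₁ = E₂ :=
  (LinearMap.cancel_right D.pbw_bijective.2).mp
    (LinearMap.pi_ext fun w a => by simpa only [LinearMap.comp_apply, pbw_single] using h w a)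

lemma adjoin_θ_t_simples_eq_top :
    Algebra.adjoin ℂ (Set.range D.θ ∪ D.t '' (D.s '' D.simples)) = ⊤ := by
  refine eq_top_iff.mpr fun h _ => ?_
  obtain ⟨c, rfl⟩ := D.pbw_bijective.2 h
  rw [pbw_apply]
  refine Subalgebra.sum_mem _ fun w _ => mul_mem ?_ ?_
  · exact D.t_mem_of_forall_simples (fun α hα =>
      Algebra.subset_adjoin (Or.inr ⟨D.s α, ⟨α, hα, rfl⟩, rfl⟩)) w
  · exact Algebra.adjoin_mono Set.subset_union_left (c w).2

def imInvolₗ : D.H →ₗ[ℂ] D.H :=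
  D.pbw ∘ₗ LinearMap.pi (fun w => D.sign w • (D.negA.toLinearMap ∘ₗ LinearMap.proj w)) ∘ₗ
    D.pbwEquiv.symm.toLinearMap

lemma imInvolₗ_t_mul (w : D.W) (a : D.A) :
    D.imInvolₗ (D.t w * a) = D.sign w • (D.t w * D.negA a) := by
  have hsymm : D.pbwEquiv.symm (D.t w * a) = Pi.single w a :=
    D.pbwEquiv.symm_apply_eq.mpr (D.pbw_single w a).symm
  have hpi : LinearMap.pi (fun u => D.sign u • (D.negA.toLinearMap ∘ₗ LinearMap.proj u))
      (Pi.single w a) = Pi.single w (D.sign w • D.negA a) := by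
    ext u
    rcases eq_or_ne u w with rfl | hu <;> simp [*]
  rw [imInvolₗ, LinearMap.comp_apply, LinearMap.comp_apply, LinearEquiv.coe_coe, hsymm, hpi,
    pbw_single, Subalgebra.coe_smul, mul_smul_comm]

lemma imInvolₗ_t (w : D.W) : D.imInvolₗ (D.t w) = D.sign w • D.t w := by
  simpa using D.imInvolₗ_t_mul w 1

lemma imInvolₗ_one : D.imInvolₗ 1 = 1 := by
  rw [← D.t_one, imInvolₗ_t, map_one, one_smul]

lemma imInvolₗ_coe_A (a : D.A) : D.imInvolₗ a = D.negA a := by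
  simpa [D.t_one] using D.imInvolₗ_t_mul 1 a

lemma imInvolₗ_θ (x : D.VC) : D.imInvolₗ (D.θ x) = -D.θ x := by
  rw [← coe_θA, imInvolₗ_coe_A, negA_θA, NegMemClass.coe_neg]

lemma imInvolₗ_t_mul_left (w : D.W) (h : D.H) :
    D.imInvolₗ (D.t w * h) = D.sign w • (D.t w * D.imInvolₗ h) := by
  have := D.linearMap_ext_t_mul (E₁ := D.imInvolₗ ∘ₗ LinearMap.mulLeft ℂ (D.t w))
    (E₂ := D.sign w • (LinearMap.mulLeft ℂ (D.t w) ∘ₗ D.imInvolₗ)) fun u a => by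
      simp only [LinearMap.comp_apply, LinearMap.smul_apply, LinearMap.mulLeft_apply,
        ← mul_assoc, D.t_mul, imInvolₗ_t_mul, map_mul, smul_smul, mul_smul_comm]
  simpa using LinearMap.congr_fun this h

lemma θ_mul_t_s_mul {α : D.V} (hα : α ∈ D.simples) (x : D.VC) (h : D.H) :
    D.θ x * (D.t (D.s α) * h) = D.t (D.s α) * (D.θ (D.actVC (D.s α) x) * h) +
      ((D.kpar α : ℂ) * D.pairC x (D.iVd (D.cv α))) • h := by
  rw [← mul_assoc, D.cross_rel α hα x, add_mul, mul_assoc, Algebra.algebraMap_eq_smul_one,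
    smul_mul_assoc, one_mul]

lemma imInvolₗ_θ_mul_t_s_mul {α : D.V} (hα : α ∈ D.simples) {h : D.H}
    (hh : ∀ x, D.imInvolₗ (D.θ x * h) = -(D.θ x * D.imInvolₗ h)) (x : D.VC) :
    D.imInvolₗ (D.θ x * (D.t (D.s α) * h)) = -(D.θ x * D.imInvolₗ (D.t (D.s α) * h)) := by
  rw [D.θ_mul_t_s_mul hα, map_add, map_smul, imInvolₗ_t_mul_left, hh, imInvolₗ_t_mul_left,
    D.sign_s (D.simple_mem_roots hα)]
  simp only [neg_one_smul, mul_neg, neg_neg]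
  rw [D.θ_mul_t_s_mul hα]

lemma imInvolₗ_θ_mul_t_mul (u : D.W) (a : D.A) (x : D.VC) :
    D.imInvolₗ (D.θ x * (D.t u * a)) = -(D.θ x * D.imInvolₗ (D.t u * a)) := by
  have hu : u ∈ Subgroup.closure (D.s '' D.simples) :=
    D.closure_s_simples_eq_top ▸ Subgroup.mem_top u
  induction hu using Subgroup.closure_induction_left generalizing x with
  | one =>
    rw [D.t_one, one_mul, imInvolₗ_coe_A, ← coe_θA, ← Subalgebra.coe_mul, imInvolₗ_coe_A,
      map_mul, negA_θA, neg_mul, NegMemClass.coe_neg, Subalgebra.coe_mul]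
  | mul_left _ hs u _ ih =>
    obtain ⟨α, hα, rfl⟩ := hs
    rw [← D.t_mul, mul_assoc]
    exact D.imInvolₗ_θ_mul_t_s_mul hα ih x
  | inv_mul_cancel _ hs u _ ih =>
    obtain ⟨α, hα, rfl⟩ := hs
    rw [D.s_inv (D.simple_mem_roots hα), ← D.t_mul, mul_assoc]
    exact D.imInvolₗ_θ_mul_t_s_mul hα ih x

lemma imInvolₗ_θ_mul (x : D.VC) (h : D.H) :
    D.imInvolₗ (D.θ x * h) = -(D.θ x * D.imInvolₗ h) := by
  have := D.linearMap_ext_t_mul (E₁ := D.imInvolₗ ∘ₗ LinearMap.mulLeft ℂ (D.θ x))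
    (E₂ := -(LinearMap.mulLeft ℂ (D.θ x) ∘ₗ D.imInvolₗ)) fun u a => by
      simpa using D.imInvolₗ_θ_mul_t_mul u a x
  simpa using LinearMap.congr_fun this h

lemma imInvolₗ_mul (g h : D.H) : D.imInvolₗ (g * h) = D.imInvolₗ g * D.imInvolₗ h := by
  have hg : g ∈ Algebra.adjoin ℂ (Set.range D.θ ∪ D.t '' (D.s '' D.simples)) :=
    D.adjoin_θ_t_simples_eq_top ▸ Algebra.mem_top
  induction hg using Algebra.adjoin_induction generalizing h with
  | mem g hg =>
    rcases hg with ⟨x, rfl⟩ | ⟨w, -, rfl⟩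
    · rw [imInvolₗ_θ_mul, imInvolₗ_θ, neg_mul]
    · rw [imInvolₗ_t_mul_left, imInvolₗ_t, smul_mul_assoc]
  | algebraMap r =>
    simp only [Algebra.algebraMap_eq_smul_one, smul_mul_assoc, one_mul, map_smul, imInvolₗ_one]
  | add g₁ g₂ _ _ ih₁ ih₂ => rw [add_mul, map_add, map_add, ih₁, ih₂, add_mul]
  | mul g₁ g₂ _ _ ih₁ ih₂ => rw [mul_assoc, ih₁, ih₂, ih₁, mul_assoc]

/-- The Iwahori–Matsumoto involution. -/
def imInvol : D.H →ₐ[ℂ] D.H := AlgHom.ofLinearMap D.imInvolₗ D.imInvolₗ_one D.imInvolₗ_mul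

lemma imInvol_θ (x : D.VC) : D.imInvol (D.θ x) = -D.θ x := D.imInvolₗ_θ x

lemma imInvol_t_s {α : D.V} (hα : α ∈ D.roots) : D.imInvol (D.t (D.s α)) = -D.t (D.s α) := by
  rw [imInvol, AlgHom.ofLinearMap_apply, imInvolₗ_t, D.sign_s hα, neg_one_smul]

lemma imInvol_involutive : Function.Involutive D.imInvol := by
  have : D.imInvolₗ ∘ₗ D.imInvolₗ = LinearMap.id := D.linearMap_ext_t_mul fun w a => by
    rw [LinearMap.comp_apply, imInvolₗ_t_mul, map_smul, imInvolₗ_t_mul, smul_smul,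
      sign_mul_self, one_smul, negA_negA, LinearMap.id_apply]
  exact LinearMap.congr_fun this

lemma eq_imInvol {τ : D.H →ₐ[ℂ] D.H} (hτt : ∀ α ∈ D.simples, τ (D.t (D.s α)) = -D.t (D.s α))
    (hτθ : ∀ x, τ (D.θ x) = -D.θ x) : τ = D.imInvol := by
  refine AlgHom.ext_of_adjoin_eq_top D.adjoin_θ_t_simples_eq_top ?_
  rintro _ (⟨x, rfl⟩ | ⟨_, ⟨α, hα, rfl⟩, rfl⟩)
  · rw [hτθ, imInvol_θ]
  · rw [hτt α hα, D.imInvol_t_s (D.simple_mem_roots hα)]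

lemma wtH_comp_eq_neg {X : Type} [AddCommGroup X] [Module ℂ X] (π : D.H →ₐ[ℂ] Module.End ℂ X)
    {τ : D.H →ₐ[ℂ] D.H} (hτ : ∀ ω, τ (D.θ ω) = -D.θ ω) (μ : D.VdC) :
    D.wtH (π.comp τ) μ = D.wtH π (-μ) := by
  have hop : ∀ ω, (π.comp τ) (D.θ ω) - D.pairC ω μ • (1 : Module.End ℂ X) =
      -(π (D.θ ω) - D.pairC ω (-μ) • 1) := fun ω => by
    rw [← neg_one_smul ℂ μ, D.pairC_smul_right, AlgHom.comp_apply, hτ, map_neg]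
    module
  ext x
  exact forall_congr' fun ω => exists_congr fun n => by
    rw [hop, Module.End.neg_pow_apply_eq_zero_iff]

lemma neg_mem_omegaH_comp {X : Type} [AddCommGroup X] [Module ℂ X]
    (π : D.H →ₐ[ℂ] Module.End ℂ X) {τ : D.H →ₐ[ℂ] D.H} (hτ : ∀ ω, τ (D.θ ω) = -D.θ ω)
    {lam : D.VdC} (hlam : lam ∈ D.OmegaH π) : -lam ∈ D.OmegaH (π.comp τ) := by
  rwa [OmegaH, Set.mem_ofPred_eq, D.wtH_comp_eq_neg π hτ, neg_neg]

end GHA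

open GHA in
theorem stmt_6_general (D : GHA) :
    (∃! τ : D.H →ₐ[ℂ] D.H, Function.Bijective τ ∧
      (∀ α ∈ D.simples, τ (D.t (D.s α)) = -(D.t (D.s α))) ∧
      (∀ ω : D.VC, τ (D.θ ω) = -(D.θ ω))) ∧
    (∀ τ : D.H →ₐ[ℂ] D.H, Function.Bijective τ →
      (∀ α ∈ D.simples, τ (D.t (D.s α)) = -(D.t (D.s α))) →
      (∀ ω : D.VC, τ (D.θ ω) = -(D.θ ω)) →
      ∀ {X : Type} [AddCommGroup X] [Module ℂ X] [FiniteDimensional ℂ X],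
      ∀ (π : D.H →ₐ[ℂ] Module.End ℂ X), GHA.IsIrrRep D.H π →
        D.IsTempered π → D.IsTempered (π.comp τ) →
        ∀ lam ∈ D.OmegaH π, D.reVd lam = 0) := by
  refine ⟨⟨D.imInvol, ⟨D.imInvol_involutive.bijective,
    fun α hα => D.imInvol_t_s (D.simple_mem_roots hα), D.imInvol_θ⟩,
    fun τ hτ => D.eq_imInvol hτ.2.1 hτ.2.2⟩, ?_⟩
  intro τ _ _ hτθ X _ _ _ π _ hπ hπτ lam hlam
  have hvanish : ∀ ω, (∀ α ∈ D.simples, 0 < D.pairR ω (D.cv α)) →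
      D.pairR.flip (D.reVd lam) ω = 0 := fun ω hω => by
    have h₁ := hπ lam hlam ω hω
    have h₂ := hπτ (-lam) (D.neg_mem_omegaH_comp π hτθ hlam) ω hω
    rw [map_neg, map_neg] at h₂
    exact le_antisymm h₁ (neg_nonpos.mp h₂)
  have := LinearMap.eq_zero_of_forall_pos_imp_eq_zero D.simples (fun α => D.pairR.flip (D.cv α))
    (fun α hα => D.pairR_sumPosRoots_cv_pos hα) hvanish
  exact D.pair_nondeg_right _ (LinearMap.congr_fun this)

open GHA in
/-- the Iwahori–Matsumoto involution exists and is unique; if X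
and its IM-twist are both tempered then the weights of X are purely
imaginary. -/
theorem stmt_6 (D : GHA) (hspan : Submodule.span ℝ (D.roots : Set D.V) = ⊤) :
    (∃! τ : D.H →ₐ[ℂ] D.H, Function.Bijective τ ∧
      (∀ α ∈ D.simples, τ (D.t (D.s α)) = -(D.t (D.s α))) ∧
      (∀ ω : D.VC, τ (D.θ ω) = -(D.θ ω))) ∧
    (∀ τ : D.H →ₐ[ℂ] D.H, Function.Bijective τ →
      (∀ α ∈ D.simples, τ (D.t (D.s α)) = -(D.t (D.s α))) →
      (∀ ω : D.VC, τ (D.θ ω) = -(D.θ ω)) →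
      ∀ {X : Type} [AddCommGroup X] [Module ℂ X] [FiniteDimensional ℂ X],
      ∀ (π : D.H →ₐ[ℂ] Module.End ℂ X), GHA.IsIrrRep D.H π →
        D.IsTempered π → D.IsTempered (π.comp τ) →
        ∀ lam ∈ D.OmegaH π, D.reVd lam = 0) :=
  stmt_6_general D
end
end

section
/- Assume k_{-w₀(α)}=k_α for all α∈Π. Let (π,X) be an irreducible finite-dimensional H-module admitting a nonzero •-invariant hermitian form. Then X admits a nonzero ★-invariant hermitian form if and only if the δ-twist (π∘δ, X) is isomorphic to (π,X) as H-modules. -/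
/- Formalization of the setting of Barbasch–Ciubotaru, "Hermitian forms for
affine Hecke algebras": a reduced root system, Weyl group, parameters,
complexifications, and the graded affine Hecke algebra. -/

noncomputable section

/-! Since `x★ = t_{w₀} · (δ x)• · t_{w₀}`, twisting by `π(t_{w₀})` converts ★-invariant forms into
(• ∘ δ)-invariant ones and back. Irreducibility makes every nonzero invariant form nondegenerate,
so a (• ∘ δ)-invariant form is `⟨T x, y⟩` for a unique `T`, and comparing invariances shows that `T`
intertwines `π ∘ δ` with `π`. Conversely an intertwiner `T` turns `⟨x, y⟩` into the ★-invariant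
sesquilinear form `C(x, y) = ⟨T⁻¹ π(t_{w₀}) x, y⟩`; as ★ is an involution, `C + C*` and
`i (C - C*)` are ★-invariant hermitian forms, and they cannot both vanish. -/

namespace GHA

section Forms

variable {X : Type}

lemma exists_ne_zero_comp_left {B : X → X → ℂ} {f : X → X} (hf : Function.Surjective f)
    (hB : ∃ x y, B x y ≠ 0) : ∃ x y, B (f x) y ≠ 0 := by
  obtain ⟨x, y, hxy⟩ := hB
  obtain ⟨x', rfl⟩ := hf x
  exact ⟨x', y, hxy⟩

def hermPart (c : ℂ) (B : X → X → ℂ) (x y : X) : ℂ :=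
  c * B x y + starRingEnd ℂ (c * B y x)

lemma hermForm_hermPart (c : ℂ) (B : X → X → ℂ) : HermForm (hermPart c B) := fun x y => by
  simp only [hermPart, map_add, Complex.conj_conj]
  ring

lemma exists_hermPart_ne_zero {B : X → X → ℂ} (hB : ∃ x y, B x y ≠ 0) :
    ∃ c, ∃ x y, hermPart c B x y ≠ 0 := by
  obtain ⟨x, y, hxy⟩ := hB
  by_contra! h
  have h2 : 2 * B x y = hermPart 1 B x y - Complex.I * hermPart Complex.I B x y := by
    simp only [hermPart, map_mul, Complex.conj_I, one_mul]
    linear_combination (B x y - starRingEnd ℂ (B y x)) * Complex.I_sq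
  rw [h 1 x y, h Complex.I x y, mul_zero, sub_zero, mul_eq_zero] at h2
  exact hxy (h2.resolve_left two_ne_zero)

variable [AddCommGroup X] [Module ℂ X]

def SeparatingLeft (B : X → X → ℂ) : Prop := ∀ x, (∀ y, B x y = 0) → x = 0

def SesqForm.toLinearMap₂ {B : X → X → ℂ} (hB : SesqForm B) : X →ₗ⋆[ℂ] X →ₗ[ℂ] ℂ :=
  LinearMap.mk₂'ₛₗ (starRingEnd ℂ) (RingHom.id ℂ) B hB.1 hB.2.2.1 hB.2.1 hB.2.2.2

@[simp]
lemma SesqForm.toLinearMap₂_apply {B : X → X → ℂ} (hB : SesqForm B) (x y : X) :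
    hB.toLinearMap₂ x y = B x y := rfl

lemma SesqForm.comp_left {B : X → X → ℂ} (hB : SesqForm B) (f : X →ₗ[ℂ] X) :
    SesqForm fun x y => B (f x) y := by
  refine ⟨fun x x' y => ?_, fun x y y' => hB.2.1 _ y y', fun c x y => ?_,
    fun c x y => hB.2.2.2 c _ y⟩
  · show B (f (x + x')) y = B (f x) y + B (f x') y
    rw [map_add, hB.1]
  · show B (f (c • x)) y = _ * B (f x) y
    rw [map_smul, hB.2.2.1]

lemma SesqForm.eq_of_forall_left {B : X → X → ℂ} (hB : SesqForm B) (hsep : SeparatingLeft B)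
    {a b : X} (h : ∀ y, B a y = B b y) : a = b :=
  sub_eq_zero.1 <| hsep _ fun y => by
    rw [← hB.toLinearMap₂_apply, map_sub, LinearMap.sub_apply, sub_eq_zero]
    exact h y

lemma SeparatingLeft.comp_left {B : X → X → ℂ} (hsep : SeparatingLeft B) {f : X →ₗ[ℂ] X}
    (hf : Function.Injective f) : SeparatingLeft fun x y => B (f x) y :=
  fun x hx => (injective_iff_map_eq_zero f).1 hf x (hsep _ hx)

/- `x ↦ B x ·` is only conjugate-linear; its bijectivity is a dimension count over `ℝ`. -/
lemma SesqForm.bijective_toLinearMap₂ [FiniteDimensional ℂ X] {B : X → X → ℂ}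
    (hB : SesqForm B) (hsep : SeparatingLeft B) : Function.Bijective hB.toLinearMap₂ := by
  let Φ : X →ₗ[ℝ] Module.Dual ℂ X :=
    { toFun := hB.toLinearMap₂
      map_add' := map_add _
      map_smul' := fun r x => by
        ext y
        simp [← Complex.coe_smul] }
  have hinj : Function.Injective Φ :=
    (injective_iff_map_eq_zero Φ).2 fun x hx => hsep x fun y => LinearMap.congr_fun hx y
  have hdim : Module.finrank ℝ X = Module.finrank ℝ (Module.Dual ℂ X) := by
    rw [← Module.finrank_mul_finrank ℝ ℂ X, ← Module.finrank_mul_finrank ℝ ℂ (Module.Dual ℂ X),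
      Subspace.dual_finrank_eq]
  exact ⟨hinj, (LinearMap.injective_iff_surjective_of_finrank_eq_finrank hdim).1 hinj⟩

lemma SesqForm.exists_linearMap_eq [FiniteDimensional ℂ X] {B B' : X → X → ℂ}
    (hB : SesqForm B) (hsep : SeparatingLeft B) (hB' : SesqForm B') :
    ∃ T : X →ₗ[ℂ] X, ∀ x y, B (T x) y = B' x y := by
  let e := LinearEquiv.ofBijective hB.toLinearMap₂ (hB.bijective_toLinearMap₂ hsep)
  exact ⟨e.symm.toLinearMap.comp hB'.toLinearMap₂, fun x y =>
    LinearMap.congr_fun (e.apply_symm_apply (hB'.toLinearMap₂ x)) y⟩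

lemma SesqForm.hermPart {B : X → X → ℂ} (hB : SesqForm B) (c : ℂ) :
    SesqForm (hermPart c B) := by
  refine ⟨fun x x' y => ?_, fun x y y' => ?_, fun a x y => ?_, fun a x y => ?_⟩ <;>
    simp only [GHA.hermPart, hB.1, hB.2.1, hB.2.2.1, hB.2.2.2, map_add, map_mul,
      Complex.conj_conj] <;> ring

variable {D : GHA} {π : D.H →ₐ[ℂ] Module.End ℂ X} {κ : D.H → D.H} {B : X → X → ℂ}

lemma InvForm.separatingLeft (hirr : IsIrrRep D.H π) (hB : SesqForm B)
    (hne : ∃ x y, B x y ≠ 0) (hinv : D.InvForm π κ B) : SeparatingLeft B := by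
  have hstable :
      ∀ (a : D.H), ∀ x ∈ LinearMap.ker hB.toLinearMap₂, π a x ∈ LinearMap.ker hB.toLinearMap₂ :=
    fun a x hx => by
      ext y
      simpa [hinv a x] using LinearMap.congr_fun hx (π (κ a) y)
  rcases hirr.2 _ hstable with hbot | htop
  · intro x hx
    have : x ∈ LinearMap.ker hB.toLinearMap₂ := LinearMap.ext hx
    rwa [hbot, Submodule.mem_bot] at this
  · obtain ⟨x, y, hxy⟩ := hne
    have : x ∈ LinearMap.ker hB.toLinearMap₂ := htop ▸ Submodule.mem_top
    exact absurd (LinearMap.congr_fun this y) hxy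

lemma InvForm.hermPart (hinv : D.InvForm π κ B) (hκ : Function.Involutive κ) (c : ℂ) :
    D.InvForm π κ (hermPart c B) := fun h x y => by
  have hswap := hinv (κ h) y x
  rw [hκ h] at hswap
  simp only [GHA.hermPart, hinv h x y, ← hswap]

lemma InvForm.comp_left_of_mul_self_eq_one (hinv : D.InvForm π κ B) {u : D.H} (hu : u * u = 1) :
    D.InvForm π (fun h => κ (u * h * u)) fun x y => B (π u x) y := fun h x y => by
  have : π u (π h x) = π (u * h * u) (π u x) := by
    simp only [← Module.End.mul_apply, ← map_mul, mul_assoc, hu, mul_one]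
  dsimp only
  rw [this, hinv]

lemma InvForm.comp_symm_of_intertwines (hinv : D.InvForm π κ B) {σ : D.H → D.H}
    (T : X ≃ₗ[ℂ] X) (hT : ∀ h x, T (π (σ h) x) = π h (T x)) :
    D.InvForm π (κ ∘ σ) fun x y => B (T.symm x) y := fun h x y => by
  have : T.symm (π h x) = π (σ h) (T.symm x) :=
    T.symm_apply_eq.2 (by rw [hT, T.apply_symm_apply])
  dsimp only
  rw [this, hinv, Function.comp_apply]

lemma exists_intertwiner_of_invForm [FiniteDimensional ℂ X] {σ : D.H → D.H}
    (hσ : Function.Involutive σ) (hB : SesqForm B) (hsep : SeparatingLeft B)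
    (hinv : D.InvForm π κ B) {B' : X → X → ℂ} (hB' : SesqForm B')
    (hsep' : SeparatingLeft B') (hinv' : D.InvForm π (κ ∘ σ) B') :
    ∃ T : X ≃ₗ[ℂ] X, ∀ h x, T (π (σ h) x) = π h (T x) := by
  obtain ⟨T, hT⟩ := hB.exists_linearMap_eq hsep hB'
  have hinj : Function.Injective T := (injective_iff_map_eq_zero T).2 fun x hx =>
    hsep' x fun y => by rw [← hT, hx]; exact hB.toLinearMap₂.map_zero₂ y
  refine ⟨LinearEquiv.ofInjectiveEndo T hinj, fun h x => hB.eq_of_forall_left hsep fun y => ?_⟩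
  calc B (T (π (σ h) x)) y = B' x (π (κ (σ (σ h))) y) := by rw [hT, hinv']; rfl
    _ = B (π h (T x)) y := by rw [hσ h, ← hT, hinv]

end Forms

section Algebra

variable (D : GHA)

lemma w0_mul_self : D.w0 * D.w0 = 1 := by
  have hsq_pos : ∀ α ∈ D.posRoots, D.actV (D.w0 * D.w0) α ∈ D.posRoots := fun α hα => by
    simpa [map_mul] using D.w0_neg _ (D.w0_neg α hα)
  have h : D.w0 * (D.w0 * D.w0) = D.w0 := D.w0_unique _ fun α hα => by
    simpa [map_mul] using D.w0_neg _ (hsq_pos α hα)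
  exact mul_left_cancel (h.trans (mul_one D.w0).symm)

lemma w0_inv : D.w0⁻¹ = D.w0 :=
  inv_eq_of_mul_eq_one_left D.w0_mul_self

lemma t_w0_mul_self : D.t D.w0 * D.t D.w0 = 1 := by
  rw [D.t_mul, D.w0_mul_self, D.t_one]

lemma t_w0_conj_mul (a b : D.H) :
    D.t D.w0 * a * D.t D.w0 * (D.t D.w0 * b * D.t D.w0) = D.t D.w0 * (a * b) * D.t D.w0 := by
  simp only [mul_assoc, ← mul_assoc (D.t D.w0) (D.t D.w0), D.t_w0_mul_self, one_mul]

lemma actVC_w0_actVC_w0 (x : D.VC) : D.actVC D.w0 (D.actVC D.w0 x) = x := by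
  rw [← LinearEquiv.mul_apply, ← map_mul, D.w0_mul_self, map_one]
  rfl

/- With `r + i m` the decomposition of `i b`, `i (b - m) = r`; pairing with real coweights gives
an imaginary number equal to a real one, so both vanish. -/
lemma re_im_I_smul_iV (b : D.V) :
    D.reV (Complex.I • D.iV b) = 0 ∧ D.imV (Complex.I • D.iV b) = b := by
  set r := D.reV (Complex.I • D.iV b)
  set m := D.imV (Complex.I • D.iV b)
  have hdec : Complex.I • D.iV (b - m) = D.iV r := by
    rw [map_sub, smul_sub, D.vc_decomp (Complex.I • D.iV b)]
    abel
  have hpair : ∀ u : D.Vd, Complex.I * (D.pairR (b - m) u : ℂ) = (D.pairR r u : ℂ) := fun u => by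
    rw [← D.pairC_compat, ← D.pairC_compat, ← D.pairC_smul_left, hdec]
  have him (u : D.Vd) : D.pairR (b - m) u = 0 := by simpa using congrArg Complex.im (hpair u)
  have hre (u : D.Vd) : D.pairR r u = 0 := by simpa using (congrArg Complex.re (hpair u)).symm
  exact ⟨D.pair_nondeg_left _ hre, (sub_eq_zero.1 (D.pair_nondeg_left _ him)).symm⟩

lemma conjVC_iV_add_I_smul (a b : D.V) :
    D.conjVC (D.iV a + Complex.I • D.iV b) = D.iV a - Complex.I • D.iV b := by
  simp only [conjVC, map_add, D.reV_iV, D.imV_iV, (D.re_im_I_smul_iV b).1,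
    (D.re_im_I_smul_iV b).2, add_zero, zero_add]

lemma conjVC_conjVC (x : D.VC) : D.conjVC (D.conjVC x) = x := by
  have : D.conjVC x = D.iV (D.reV x) + Complex.I • D.iV (-D.imV x) := by
    rw [conjVC, map_neg, smul_neg, sub_eq_add_neg]
  rw [this, conjVC_iV_add_I_smul, map_neg, smul_neg, sub_neg_eq_add, ← D.vc_decomp x]

lemma conjVC_actVC (w : D.W) (x : D.VC) :
    D.conjVC (D.actVC w x) = D.actVC w (D.conjVC x) := by
  conv_lhs => rw [D.vc_decomp x]
  rw [map_add, map_smul, D.actVC_iV, D.actVC_iV, conjVC_iV_add_I_smul, conjVC, map_sub,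
    map_smul, D.actVC_iV, D.actVC_iV]

lemma adjoin_θ_t_eq_top : Algebra.adjoin ℂ (Set.range D.θ ∪ Set.range D.t) = ⊤ := by
  refine eq_top_iff.2 fun h _ => ?_
  obtain ⟨c, rfl⟩ := D.pbw_span h
  refine Subalgebra.sum_mem _ fun w _ => mul_mem ?_ ?_
  · exact Algebra.subset_adjoin (Or.inr ⟨w, rfl⟩)
  · exact Algebra.adjoin_mono Set.subset_union_left (c w).2

@[elab_as_elim]
lemma induction_on {P : D.H → Prop} (hone : P 1) (hsmul : ∀ (c : ℂ) a, P a → P (c • a))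
    (hadd : ∀ a b, P a → P b → P (a + b)) (hmul : ∀ a b, P a → P b → P (a * b))
    (ht : ∀ w, P (D.t w)) (hθ : ∀ x, P (D.θ x)) (h : D.H) : P h := by
  have hmem : h ∈ Algebra.adjoin ℂ (Set.range D.θ ∪ Set.range D.t) :=
    D.adjoin_θ_t_eq_top ▸ Algebra.mem_top
  induction hmem using Algebra.adjoin_induction with
  | mem x hx => rcases hx with ⟨x, rfl⟩ | ⟨w, rfl⟩ <;> simp only [ht, hθ]
  | algebraMap c => simpa [Algebra.algebraMap_eq_smul_one] using hsmul c 1 hone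
  | add a b _ _ ha hb => exact hadd a b ha hb
  | mul a b _ _ ha hb => exact hmul a b ha hb

lemma map_neg_of_map_add {f : D.H → D.H} (hf : ∀ a b, f (a + b) = f a + f b) (a : D.H) :
    f (-a) = -f a :=
  map_neg (AddMonoidHom.mk' f hf) a

variable {D} {bul st del : D.H → D.H}

lemma IsDelta.involutive (hd : D.IsDelta del) : Function.Involutive del := by
  intro h
  induction h using D.induction_on with
  | hone => rw [hd.map_one, hd.map_one]
  | hsmul c a ha => rw [hd.map_smul, hd.map_smul, ha]
  | hadd a b ha hb => rw [hd.map_add, hd.map_add, ha, hb]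
  | hmul a b ha hb => rw [hd.map_mul, hd.map_mul, ha, hb]
  | ht w =>
    rw [hd.map_t, hd.map_t]
    simp only [mul_assoc, D.w0_mul_self, ← mul_assoc D.w0 D.w0, one_mul, mul_one]
  | hθ x =>
    rw [hd.map_theta, D.map_neg_of_map_add hd.map_add, hd.map_theta, neg_neg,
      D.actVC_w0_actVC_w0]

lemma IsStar.involutive (hs : D.IsStar st) : Function.Involutive st := by
  intro h
  induction h using D.induction_on with
  | hone => rw [hs.map_one, hs.map_one]
  | hsmul c a ha => rw [hs.map_smul, hs.map_smul, ha, Complex.conj_conj]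
  | hadd a b ha hb => rw [hs.map_add, hs.map_add, ha, hb]
  | hmul a b ha hb => rw [hs.map_mul, hs.map_mul, ha, hb]
  | ht w => rw [hs.map_t, hs.map_t, inv_inv]
  | hθ x =>
    rw [hs.map_theta, D.map_neg_of_map_add hs.map_add, hs.map_mul, hs.map_mul, hs.map_t,
      D.w0_inv, hs.map_theta, D.conjVC_actVC, D.conjVC_conjVC, D.actVC_w0_actVC_w0]
    simp only [neg_mul, mul_neg, neg_neg, ← mul_assoc, D.t_w0_mul_self, one_mul]
    simp only [mul_assoc, D.t_w0_mul_self, mul_one]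

lemma IsStar.eq_t_w0_mul_bul_del (hb : D.IsBullet bul) (hs : D.IsStar st)
    (hd : D.IsDelta del) (h : D.H) : st h = D.t D.w0 * bul (del h) * D.t D.w0 := by
  induction h using D.induction_on with
  | hone => rw [hs.map_one, hd.map_one, hb.map_one, mul_one, D.t_w0_mul_self]
  | hsmul c a ha => rw [hs.map_smul, hd.map_smul, hb.map_smul, ha, mul_smul_comm, smul_mul_assoc]
  | hadd a b ha hb' => rw [hs.map_add, hd.map_add, hb.map_add, ha, hb', mul_add, add_mul]
  | hmul a b ha hb' => rw [hs.map_mul, hd.map_mul, hb.map_mul, ha, hb', D.t_w0_conj_mul]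
  | ht w =>
    rw [hs.map_t, hd.map_t, hb.map_t, D.t_mul, D.t_mul]
    congr 1
    group
  | hθ x =>
    rw [hs.map_theta, hd.map_theta, D.map_neg_of_map_add hb.map_add, hb.map_theta, mul_neg,
      neg_mul]

lemma IsStar.map_t_w0_conj (hb : D.IsBullet bul) (hs : D.IsStar st) (hd : D.IsDelta del)
    (h : D.H) : st (D.t D.w0 * h * D.t D.w0) = bul (del h) := by
  rw [hs.map_mul, hs.map_mul, hs.map_t, D.w0_inv, hs.eq_t_w0_mul_bul_del hb hd]
  simp only [← mul_assoc, D.t_w0_mul_self, one_mul]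
  simp only [mul_assoc, D.t_w0_mul_self, mul_one]

lemma IsBullet.map_del_t_w0_conj (hb : D.IsBullet bul) (hs : D.IsStar st) (hd : D.IsDelta del)
    (h : D.H) : bul (del (D.t D.w0 * h * D.t D.w0)) = st h := by
  rw [hd.map_mul, hd.map_mul, hd.map_t, D.w0_mul_self, one_mul, hb.map_mul, hb.map_mul,
    hb.map_t, D.w0_inv, hs.eq_t_w0_mul_bul_del hb hd, mul_assoc]

lemma involutive_t_w0 {X : Type} [AddCommGroup X] [Module ℂ X] (π : D.H →ₐ[ℂ] Module.End ℂ X) :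
    Function.Involutive (π (D.t D.w0)) := fun x => by
  rw [← Module.End.mul_apply, ← map_mul, D.t_w0_mul_self, map_one, Module.End.one_apply]

end Algebra

end GHA

open GHA in
theorem stmt_10_general (D : GHA) (bul st del : D.H → D.H)
    (hb : D.IsBullet bul) (hs : D.IsStar st) (hd : D.IsDelta del)
    {X : Type} [AddCommGroup X] [Module ℂ X] [FiniteDimensional ℂ X]
    (π : D.H →ₐ[ℂ] Module.End ℂ X) (hirr : GHA.IsIrrRep D.H π)
    (B : X → X → ℂ) (hsesq : SesqForm B)
    (hne : ∃ x y, B x y ≠ 0) (hinv : D.InvForm π bul B) :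
    (∃ B' : X → X → ℂ, SesqForm B' ∧ HermForm B' ∧ (∃ x y, B' x y ≠ 0) ∧
        D.InvForm π st B') ↔
    (∃ T : X ≃ₗ[ℂ] X, ∀ (h : D.H) (x : X), T (π (del h) x) = π h (T x)) := by
  have hsep := hinv.separatingLeft hirr hsesq hne
  have ht₀ := involutive_t_w0 π
  constructor
  · rintro ⟨B', hB', -, hne', hinv'⟩
    have hinv'' : D.InvForm π (bul ∘ del) fun x y => B' (π (D.t D.w0) x) y := by
      convert hinv'.comp_left_of_mul_self_eq_one D.t_w0_mul_self using 1
      exact funext fun h => (hs.map_t_w0_conj hb hd h).symm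
    exact exists_intertwiner_of_invForm hd.involutive hsesq hsep hinv (hB'.comp_left _)
      ((hinv'.separatingLeft hirr hB' hne').comp_left ht₀.injective) hinv''
  · rintro ⟨T, hT⟩
    set B₀ : X → X → ℂ := fun x y => B (T.symm (π (D.t D.w0) x)) y
    have hinv₀ : D.InvForm π st B₀ := by
      convert (hinv.comp_symm_of_intertwines T hT).comp_left_of_mul_self_eq_one
        D.t_w0_mul_self using 1
      exact funext fun h => (hb.map_del_t_w0_conj hs hd h).symm
    obtain ⟨c, hc⟩ := exists_hermPart_ne_zero
      (exists_ne_zero_comp_left (T.symm.surjective.comp ht₀.surjective) hne)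
    exact ⟨hermPart c B₀, (hsesq.comp_left (T.symm.toLinearMap ∘ₗ π (D.t D.w0))).hermPart c,
      hermForm_hermPart c B₀, hc, hinv₀.hermPart hs.involutive c⟩

open GHA in
/-- for an irreducible module with a nonzero •-invariant hermitian
form, a nonzero ★-invariant hermitian form exists iff the δ-twist is isomorphic
to the module. -/
theorem stmt_10 (D : GHA) (hk : D.KSymm) (bul st del : D.H → D.H)
    (hb : D.IsBullet bul) (hs : D.IsStar st) (hd : D.IsDelta del)
    {X : Type} [AddCommGroup X] [Module ℂ X] [FiniteDimensional ℂ X]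
    (π : D.H →ₐ[ℂ] Module.End ℂ X) (hirr : GHA.IsIrrRep D.H π)
    (B : X → X → ℂ) (hsesq : SesqForm B) (hherm : HermForm B)
    (hne : ∃ x y, B x y ≠ 0) (hinv : D.InvForm π bul B) :
    (∃ B' : X → X → ℂ, SesqForm B' ∧ HermForm B' ∧ (∃ x y, B' x y ≠ 0) ∧
        D.InvForm π st B') ↔
    (∃ T : X ≃ₗ[ℂ] X, ∀ (h : D.H) (x : X), T (π (del h) x) = π h (T x)) :=
  stmt_10_general D bul st del hb hs hd π hirr B hsesq hne hinv
end
end
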